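/- Let sp(j) be the number of partitions of j without repeated odd parts and with an even number of odd parts, minus the number of such partitions (without repeated odd parts) with an odd number of odd parts. Then ∑_{j≥0} sp(j) q^j = ∏_{j≥1} (1-q^{2j-1})/(1-q^{2j}) as formal power series. -/

import Mathlib

open scoped Classical

/-- `sp j`: the signed count of partitions of `j` without repeated odd parts,
each partition weighted by `(-1)^{number of odd parts}`.  Thus `sp j` is the number
of such partitions with an even number of odd parts minus the number with an odd
number of odd parts; `sp 0 = 1`. -/
noncomputable def signedNoRepeatedOddPartitions (j : ℕ) : ℤ :=
  ∑ᶠ P : {P : Nat.Partition j // ∀ i ∈ P.parts, Odd i → P.parts.count i ≤ 1},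
    (-1 : ℤ) ^ (Multiset.card ((P : Nat.Partition j).parts.filter (fun i => Odd i)))

/-!
With the part weight `f(i, c)` (`noRepeatedOddSign`) equal to `(-1)^c` for odd `i` and
`c ≤ 1`, to `0` for odd `i` and `c ≥ 2`, and to `1` for even `i`, the sum over partitions `p`
of `n` of `∏_{i ∈ p} f(i, #i)`, `#i` the multiplicity of `i` in `p`, is `sp(n)`.
Mathlib's `Nat.Partition.hasProd_genFun` factors this generating function as
`∏_k (1 + ∑_{c ≥ 1} f(k, c) X^{kc})`, whose `k`-th factor is `1 - X^k` for odd `k` and the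
geometric series `(1 - X^k)⁻¹` for even `k`. Factors with `k > n` are `≡ 1 mod X^{n+1}`, so the
coefficient of `X^n` is already that of a finite partial product.
-/

open Finset PowerSeries
open scoped PowerSeries.WithPiTopology

theorem Multiset.neg_one_pow_card_filter {R α : Type*} [CommRing R] (p : α → Prop)
    [DecidablePred p] (s : Multiset α) :
    (-1 : R) ^ card (s.filter p) = (s.map fun i => if p i then -1 else 1).prod := by
  induction s using Multiset.induction_on with
  | empty => simp
  | cons a s ih => by_cases h : p a <;> simp [h, pow_succ, ih, mul_comm]

theorem Finset.prod_range_two_mul {M : Type*} [CommMonoid M] (f : ℕ → M) (m : ℕ) :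
    ∏ i ∈ range (2 * m), f i = ∏ j ∈ range m, f (2 * j) * f (2 * j + 1) := by
  induction m with
  | zero => simp
  | succ m ih => rw [mul_add_one, prod_range_succ, prod_range_succ, prod_range_succ, ih, mul_assoc]

namespace PowerSeries

variable {R : Type*} [CommRing R]

theorem coeff_prod_eq_of_subset {ι : Type*} {F : ι → R⟦X⟧} {s t : Finset ι} (n : ℕ)
    (hts : t ⊆ s) (hF : ∀ i ∈ s \ t, X ^ (n + 1) ∣ F i - 1) :
    coeff n (∏ i ∈ s, F i) = coeff n (∏ i ∈ t, F i) := by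
  have hrest : X ^ (n + 1) ∣ ∏ i ∈ s \ t, F i - 1 := by
    refine prod_induction _ (fun a => X ^ (n + 1) ∣ a - 1) (fun a b ha hb => ?_) (by simp) hF
    rw [show a * b - 1 = a * (b - 1) + (a - 1) by ring]
    exact dvd_add (dvd_mul_of_dvd_right hb a) ha
  have hdiff : X ^ (n + 1) ∣ ∏ i ∈ s, F i - ∏ i ∈ t, F i := by
    rw [← prod_sdiff hts, ← sub_one_mul]
    exact dvd_mul_of_dvd_left hrest _
  rw [← sub_eq_zero, ← map_sub]
  exact X_pow_dvd_iff.1 hdiff n n.lt_succ_self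

theorem coeff_eq_coeff_prod_of_hasProd [TopologicalSpace R] [T2Space R] {ι : Type*}
    {F : ι → R⟦X⟧} {G : R⟦X⟧} (hG : HasProd F G) (n : ℕ) {t : Finset ι}
    (hF : ∀ i ∉ t, X ^ (n + 1) ∣ F i - 1) :
    coeff n G = coeff n (∏ i ∈ t, F i) := by
  refine tendsto_nhds_unique ((WithPiTopology.tendsto_iff_coeff_tendsto _ _ _ _).1 hG n)
    (tendsto_const_nhds.congr' (Filter.eventually_atTop.2 ⟨t, fun s hs => ?_⟩))
  exact (coeff_prod_eq_of_subset n hs fun i hi => hF i (mem_sdiff.1 hi).2).symm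

end PowerSeries

def noRepeatedOddSign (R : Type*) [CommRing R] (i c : ℕ) : R :=
  if Odd i then (if c ≤ 1 then (-1) ^ c else 0) else 1

section Coefficients

variable {R : Type*} [CommRing R]

theorem Multiset.toFinsupp_prod_noRepeatedOddSign (s : Multiset ℕ) :
    s.toFinsupp.prod (noRepeatedOddSign R) =
      if ∀ i ∈ s, Odd i → s.count i ≤ 1 then (-1) ^ card (s.filter Odd) else 0 := by
  rw [Finsupp.prod, Multiset.toFinsupp_support]
  simp_rw [Multiset.toFinsupp_apply]
  split_ifs with h
  · rw [Multiset.neg_one_pow_card_filter, prod_multiset_map_count]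
    refine prod_congr rfl fun i hi => ?_
    by_cases hodd : Odd i
    · simp [noRepeatedOddSign, hodd, h i (Multiset.mem_toFinset.1 hi) hodd]
    · simp [noRepeatedOddSign, hodd]
  · push Not at h
    obtain ⟨i, hi, hodd, hc⟩ := h
    exact Finset.prod_eq_zero (Multiset.mem_toFinset.2 hi)
      (by simp [noRepeatedOddSign, hodd, hc.not_ge])

theorem cast_signedNoRepeatedOddPartitions_eq_sum (n : ℕ) :
    (signedNoRepeatedOddPartitions n : R) = ∑ p : n.Partition,
      if ∀ i ∈ p.parts, Odd i → p.parts.count i ≤ 1 then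
        (-1) ^ Multiset.card (p.parts.filter Odd) else 0 := by
  rw [signedNoRepeatedOddPartitions, finsum_eq_sum_of_fintype, ← sum_filter]
  push_cast
  exact (sum_subtype _ (fun p => mem_filter_univ p)
    fun p : n.Partition => (-1 : R) ^ Multiset.card (p.parts.filter Odd)).symm

theorem coeff_genFun_noRepeatedOddSign (n : ℕ) :
    coeff n (Nat.Partition.genFun (noRepeatedOddSign R)) = signedNoRepeatedOddPartitions n := by
  simp_rw [Nat.Partition.coeff_genFun, Multiset.toFinsupp_prod_noRepeatedOddSign,
    cast_signedNoRepeatedOddPartitions_eq_sum]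

end Coefficients

noncomputable def noRepeatedOddFactor (R : Type*) [CommRing R] [TopologicalSpace R] (k : ℕ) :
    R⟦X⟧ :=
  1 + ∑' j, noRepeatedOddSign R k (j + 1) • X ^ (k * (j + 1))

theorem noRepeatedOddFactor_of_odd {R : Type*} [CommRing R] [TopologicalSpace R] {k : ℕ}
    (hk : Odd k) : noRepeatedOddFactor R k = 1 - X ^ k := by
  rw [noRepeatedOddFactor, tsum_eq_single 0 fun j hj => by simp [noRepeatedOddSign, hk, hj]]
  simp [noRepeatedOddSign, hk, sub_eq_add_neg]

section Field

variable {K : Type*} [Field K] [TopologicalSpace K] [IsTopologicalRing K] [T2Space K]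

theorem noRepeatedOddFactor_of_even {k : ℕ} (hk : Even k) (hk0 : k ≠ 0) :
    noRepeatedOddFactor K k = (1 - X ^ k)⁻¹ := by
  have hXk : constantCoeff ((X : K⟦X⟧) ^ k) = 0 := by simp [hk0]
  have hgeom : noRepeatedOddFactor K k = ∑' j, ((X : K⟦X⟧) ^ k) ^ j := by
    rw [noRepeatedOddFactor,
      (WithPiTopology.summable_pow_of_constantCoeff_eq_zero hXk).tsum_eq_zero_add]
    simp [noRepeatedOddSign, Nat.not_odd_iff_even.2 hk, pow_mul]
  rw [hgeom, eq_inv_iff_mul_eq_one (by simp [hk0])]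
  exact WithPiTopology.tsum_pow_mul_one_sub_of_constantCoeff_eq_zero hXk

theorem X_pow_dvd_noRepeatedOddFactor_sub_one {k : ℕ} (hk0 : k ≠ 0) :
    X ^ k ∣ noRepeatedOddFactor K k - 1 := by
  rcases Nat.even_or_odd k with hk | hk
  · have hinv : (1 - (X : K⟦X⟧) ^ k)⁻¹ * (1 - X ^ k) = 1 :=
      PowerSeries.inv_mul_cancel _ (by simp [hk0])
    refine ⟨(1 - X ^ k)⁻¹, ?_⟩
    rw [noRepeatedOddFactor_of_even hk hk0]
    linear_combination hinv
  · exact ⟨-1, by rw [noRepeatedOddFactor_of_odd hk]; ring⟩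

end Field

theorem coeff_genFun_noRepeatedOddSign_eq_coeff_prod {K : Type*} [Field K] (n : ℕ) :
    coeff n (Nat.Partition.genFun (noRepeatedOddSign K)) =
      coeff n (∏ j ∈ range (n + 1),
        (1 - (X : K⟦X⟧) ^ (2 * j + 1)) * (1 - X ^ (2 * j + 2))⁻¹) := by
  -- any Hausdorff topology on `K` serves to take the infinite product
  let _ : TopologicalSpace K := ⊥
  have _ : DiscreteTopology K := ⟨rfl⟩
  have hprod : HasProd (fun i => noRepeatedOddFactor K (i + 1)) _ :=
    Nat.Partition.hasProd_genFun (noRepeatedOddSign K)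
  have htail (i : ℕ) (hi : i ∉ range (2 * (n + 1))) :
      X ^ (n + 1) ∣ noRepeatedOddFactor K (i + 1) - 1 :=
    (pow_dvd_pow X (by simp at hi; omega)).trans
      (X_pow_dvd_noRepeatedOddFactor_sub_one i.succ_ne_zero)
  rw [coeff_eq_coeff_prod_of_hasProd hprod n htail, prod_range_two_mul]
  refine congrArg _ (prod_congr rfl fun j _ => ?_)
  rw [noRepeatedOddFactor_of_odd (odd_two_mul_add_one j),
    noRepeatedOddFactor_of_even (k := 2 * j + 2) ⟨j + 1, by ring⟩ (by omega)]

/-- `∑_{j≥0} sp(j) q^j = ∏_{j≥1} (1-q^{2j-1})/(1-q^{2j})` as formal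
power series; stated coefficientwise, representing the infinite product by the
finite product over `1 ≤ j ≤ n+1` (later factors do not affect `q^n`). -/
theorem stmt2 (n : ℕ) :
    PowerSeries.coeff (R := ℚ) n
        (PowerSeries.mk fun j => (signedNoRepeatedOddPartitions j : ℚ))
      = PowerSeries.coeff (R := ℚ) n
          (∏ j ∈ Finset.range (n + 1),
            ((1 - (PowerSeries.X : PowerSeries ℚ) ^ (2 * j + 1)) *
              (1 - (PowerSeries.X : PowerSeries ℚ) ^ (2 * j + 2))⁻¹)) := by
  rw [coeff_mk, ← coeff_genFun_noRepeatedOddSign, coeff_genFun_noRepeatedOddSign_eq_coeff_prod]
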